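/- For every admissible integer n, the maximum number of colliders in a chain–collider–fork decomposition of TT_n equals n(n−2)/4 when n is even, and equals (n−1)²/4 when n is odd. -/

import Mathlib

/-- The arc set of the transitive tournament `TT n` on vertices `Fin n`
(vertex `v_{i+1}` of the paper is index `i`): there is an arc `(i, j)` iff `i < j`. -/
def ttArcs (n : ℕ) : Finset (Fin n × Fin n) :=
  Finset.univ.filter fun p => p.1 < p.2

/-- A chain: a two-arc block `{(i,j), (j,k)}` with `i < j < k`. -/
def IsChainMotif {n : ℕ} (b : Finset (Fin n × Fin n)) : Prop :=
  ∃ i j k : Fin n, i < j ∧ j < k ∧ b = {(i, j), (j, k)}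

/-- A collider: a two-arc block `{(i,j), (k,j)}` with `i, k < j` and `i ≠ k`. -/
def IsColliderMotif {n : ℕ} (b : Finset (Fin n × Fin n)) : Prop :=
  ∃ i k j : Fin n, i < j ∧ k < j ∧ i ≠ k ∧ b = {(i, j), (k, j)}

/-- A fork: a two-arc block `{(i,j), (i,k)}` with `i < j`, `i < k` and `j ≠ k`. -/
def IsForkMotif {n : ℕ} (b : Finset (Fin n × Fin n)) : Prop :=
  ∃ i j k : Fin n, i < j ∧ i < k ∧ j ≠ k ∧ b = {(i, j), (i, k)}

instance {n : ℕ} : DecidablePred (IsChainMotif (n := n)) := fun b => by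
  unfold IsChainMotif; infer_instance

instance {n : ℕ} : DecidablePred (IsColliderMotif (n := n)) := fun b => by
  unfold IsColliderMotif; infer_instance

instance {n : ℕ} : DecidablePred (IsForkMotif (n := n)) := fun b => by
  unfold IsForkMotif; infer_instance

/-- `P` is a decomposition of the arc set of `TT n`: its blocks are pairwise
disjoint and their union is the whole arc set. -/
def IsTTDecomposition {n : ℕ} (P : Finset (Finset (Fin n × Fin n))) : Prop :=
  (P : Set (Finset (Fin n × Fin n))).PairwiseDisjoint id ∧ P.sup id = ttArcs n

/-- `n` is admissible iff `n ≡ 0` or `1 (mod 4)`. -/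
def Admissible (n : ℕ) : Prop := n % 4 = 0 ∨ n % 4 = 1

/-!
The colliders of a decomposition with head `j` are pairwise disjoint pairs of the `j` arcs
entering `j`, so there are at most `⌊j/2⌋` of them, and `∑_{j<n} ⌊j/2⌋ = ⌊(n-1)²/4⌋` is the
claimed maximum. The bound is attained by pairing the arcs entering `j` as colliders
`{(i,j), (i+1,j)}` with `i ≡ j (mod 2)`; this leaves only the arcs `(0,j)` with `j` odd, and
these are paired into forks `{(0,j), (0,j+2)}`, `j ≡ 1 (mod 4)`, which works because their
number `⌊n/2⌋` is even for admissible `n`.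
-/

open Finset

section PairBlocks

variable {α : Type*} [DecidableEq α]

theorem card_biUnion_id_of_card_eq {D : Finset (Finset α)} {k : ℕ}
    (hD : (D : Set (Finset α)).PairwiseDisjoint id) (hk : ∀ b ∈ D, #b = k) :
    #(D.biUnion id) = #D * k :=
  (card_biUnion hD).trans (sum_const_nat hk)

def pairBlocks (s : Finset α) (σ : α → α) : Finset (Finset α) :=
  s.image fun a => {a, σ a}

variable {s : Finset α} {σ : α → α}

theorem pair_eq_of_mem_pair (hσ : Function.Involutive σ) {a x : α}
    (hx : x ∈ ({a, σ a} : Finset α)) : ({x, σ x} : Finset α) = {a, σ a} := by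
  rcases mem_insert.1 hx with rfl | hx
  · rfl
  · rw [mem_singleton.1 hx, hσ, pair_comm]

theorem pairwiseDisjoint_pairBlocks (hσ : Function.Involutive σ) :
    (pairBlocks s σ : Set (Finset α)).PairwiseDisjoint id := by
  rw [pairBlocks, coe_image]
  rintro _ ⟨a, -, rfl⟩ _ ⟨b, -, rfl⟩ hne
  refine disjoint_left.2 fun x (hxa : x ∈ {a, σ a}) (hxb : x ∈ {b, σ b}) => hne ?_
  exact (pair_eq_of_mem_pair hσ hxa).symm.trans (pair_eq_of_mem_pair hσ hxb)

theorem biUnion_filter_pairBlocks (hσ : Function.Involutive σ) (hs : ∀ a ∈ s, σ a ∈ s)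
    (Q : Finset α → Prop) [DecidablePred Q] :
    ((pairBlocks s σ).filter Q).biUnion id = s.filter fun a => Q {a, σ a} := by
  ext x
  simp only [pairBlocks, mem_biUnion, mem_filter, mem_image, id]
  constructor
  · rintro ⟨_, ⟨⟨a, ha, rfl⟩, hQ⟩, hx⟩
    refine ⟨?_, pair_eq_of_mem_pair hσ hx ▸ hQ⟩
    rcases mem_insert.1 hx with rfl | hx
    · exact ha
    · exact mem_singleton.1 hx ▸ hs a ha
  · rintro ⟨hx, hQ⟩
    exact ⟨_, ⟨⟨x, hx, rfl⟩, hQ⟩, mem_insert_self _ _⟩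

theorem sup_pairBlocks (hσ : Function.Involutive σ) (hs : ∀ a ∈ s, σ a ∈ s) :
    (pairBlocks s σ).sup id = s := by
  simpa [sup_eq_biUnion] using biUnion_filter_pairBlocks hσ hs fun _ => True

end PairBlocks

section Motifs

variable {n : ℕ}

def inArcs (j : Fin n) : Finset (Fin n × Fin n) := (ttArcs n).filter (·.2 = j)

theorem inArcs_eq_image (j : Fin n) : inArcs j = (Iio j).image (·, j) := by
  ext ⟨i, k⟩
  simp only [inArcs, ttArcs, mem_filter, mem_univ, true_and, mem_image, mem_Iio, Prod.mk.injEq]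
  constructor
  · rintro ⟨hik, rfl⟩; exact ⟨i, hik, rfl, rfl⟩
  · rintro ⟨_, hij, rfl, rfl⟩; exact ⟨hij, rfl⟩

theorem card_inArcs (j : Fin n) : #(inArcs j) = j := by
  rw [inArcs_eq_image, card_image_of_injective _ (Prod.mk_left_injective j), Fin.card_Iio]

variable {b : Finset (Fin n × Fin n)}

theorem IsColliderMotif.card_eq_two (hb : IsColliderMotif b) : #b = 2 := by
  obtain ⟨i, k, j, -, -, hik, rfl⟩ := hb
  exact card_pair (by simpa using hik)

theorem IsColliderMotif.exists_subset_inArcs (hb : IsColliderMotif b) : ∃ j, b ⊆ inArcs j := by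
  obtain ⟨i, k, j, hij, hkj, -, rfl⟩ := hb
  refine ⟨j, ?_⟩
  simp [insert_subset_iff, inArcs, ttArcs, hij, hkj]

theorem IsForkMotif.not_isColliderMotif (hb : IsForkMotif b) : ¬ IsColliderMotif b := by
  obtain ⟨i, j, k, -, -, hjk, rfl⟩ := hb
  rintro ⟨i', k', l, -, -, -, he⟩
  have hj : (i, j) ∈ ({(i', l), (k', l)} : Finset _) := he ▸ by simp
  have hk : (i, k) ∈ ({(i', l), (k', l)} : Finset _) := he ▸ by simp
  simp only [mem_insert, mem_singleton, Prod.mk.injEq] at hj hk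
  exact hjk (by grind)

end Motifs

theorem card_filter_isColliderMotif_le {n : ℕ} {P : Finset (Finset (Fin n × Fin n))}
    (hP : (P : Set (Finset (Fin n × Fin n))).PairwiseDisjoint id) :
    #(P.filter IsColliderMotif) ≤ ∑ j : Fin n, (j : ℕ) / 2 := by
  set C := P.filter IsColliderMotif
  have hC : C ⊆ univ.biUnion fun j => C.filter (· ⊆ inArcs j) := fun b hb => by
    obtain ⟨j, hj⟩ := (mem_filter.1 hb).2.exists_subset_inArcs
    exact mem_biUnion.2 ⟨j, mem_univ _, mem_filter.2 ⟨hb, hj⟩⟩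
  refine (card_le_card hC).trans (card_biUnion_le.trans (sum_le_sum fun j _ => ?_))
  rw [Nat.le_div_iff_mul_le two_pos, ← card_inArcs j,
    ← card_biUnion_id_of_card_eq (hP.subset (by grind)) fun b hb => ?_]
  · exact card_le_card (biUnion_subset.2 fun b hb => (mem_filter.1 hb).2)
  · exact (mem_filter.1 (mem_filter.1 hb).1).2.card_eq_two

def partnerNat (p : ℕ × ℕ) : ℕ × ℕ :=
  if p.1 = 0 ∧ p.2 % 2 = 1 then (0, if p.2 % 4 = 1 then p.2 + 2 else p.2 - 2)
  else (if p.1 % 2 = p.2 % 2 then p.1 + 1 else p.1 - 1, p.2)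

theorem partnerNat_of_fork {i j : ℕ} (h : i = 0 ∧ j % 2 = 1) :
    partnerNat (i, j) = (0, if j % 4 = 1 then j + 2 else j - 2) :=
  if_pos h

theorem partnerNat_of_not_fork {i j : ℕ} (h : ¬ (i = 0 ∧ j % 2 = 1)) :
    partnerNat (i, j) = (if i % 2 = j % 2 then i + 1 else i - 1, j) :=
  if_neg h

theorem partnerNat_involutive : Function.Involutive partnerNat := by
  rintro ⟨i, j⟩
  simp only [partnerNat]
  split_ifs <;> simp_all [Prod.ext_iff] <;> omega

theorem partnerNat_lt {n i j : ℕ} (hn : Admissible n) (hij : i < j) (hj : j < n) :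
    (partnerNat (i, j)).1 < (partnerNat (i, j)).2 ∧ (partnerNat (i, j)).2 < n := by
  unfold Admissible at hn
  simp only [partnerNat]
  split_ifs <;> simp only <;> omega

def partnerArc (n : ℕ) (a : Fin n × Fin n) : Fin n × Fin n :=
  if h : (partnerNat (a.1, a.2)).1 < n ∧ (partnerNat (a.1, a.2)).2 < n then
    (⟨_, h.1⟩, ⟨_, h.2⟩)
  else a

section PartnerArc

variable {n : ℕ} {a : Fin n × Fin n}

theorem val_partnerArc (h : (partnerNat (a.1, a.2)).1 < n ∧ (partnerNat (a.1, a.2)).2 < n) :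
    ((partnerArc n a).1.val, (partnerArc n a).2.val) = partnerNat (a.1, a.2) := by
  simp [partnerArc, h]

theorem partnerArc_involutive : Function.Involutive (partnerArc n) := by
  intro a
  by_cases h : (partnerNat (a.1, a.2)).1 < n ∧ (partnerNat (a.1, a.2)).2 < n
  · have hb : partnerNat ((partnerArc n a).1, (partnerArc n a).2) = ((a.1, a.2) : ℕ × ℕ) := by
      rw [val_partnerArc h, partnerNat_involutive]
    have := val_partnerArc (a := partnerArc n a) (by rw [hb]; exact ⟨a.1.2, a.2.2⟩)
    rw [hb, Prod.mk.injEq] at this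
    exact Prod.ext (Fin.ext this.1) (Fin.ext this.2)
  · simp only [partnerArc, dif_neg h]

def IsForkArc (a : Fin n × Fin n) : Prop := (a.1 : ℕ) = 0 ∧ (a.2 : ℕ) % 2 = 1

instance : DecidablePred (IsForkArc (n := n)) := fun _ => by unfold IsForkArc; infer_instance

variable (hn : Admissible n) (ha : a ∈ ttArcs n)
include hn ha

theorem val_partnerArc_of_mem :
    ((partnerArc n a).1.val, (partnerArc n a).2.val) = partnerNat (a.1, a.2) :=
  have h := partnerNat_lt hn (mem_filter.1 ha).2 a.2.2
  val_partnerArc ⟨h.1.trans h.2, h.2⟩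

theorem partnerArc_mem_ttArcs : partnerArc n a ∈ ttArcs n := by
  have h := (partnerNat_lt hn (mem_filter.1 ha).2 a.2.2).1
  rw [← val_partnerArc_of_mem hn ha] at h
  exact mem_filter.2 ⟨mem_univ _, h⟩

theorem isForkMotif_pair_partnerArc (hfa : IsForkArc a) : IsForkMotif {a, partnerArc n a} := by
  have h := val_partnerArc_of_mem hn ha
  rw [partnerNat_of_fork hfa, Prod.mk.injEq] at h
  have hlt : a.1 < (partnerArc n a).2 := by
    have := (mem_filter.1 (partnerArc_mem_ttArcs hn ha)).2
    rwa [Fin.lt_def, h.1, ← hfa.1, ← Fin.lt_def] at this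
  have he : partnerArc n a = (a.1, (partnerArc n a).2) :=
    Prod.ext (Fin.ext (h.1.trans hfa.1.symm)) rfl
  refine ⟨a.1, a.2, (partnerArc n a).2, (mem_filter.1 ha).2, hlt, fun hj => ?_, by rw [← he]⟩
  have := h.2
  rw [← hj] at this
  split_ifs at this <;> omega

theorem isColliderMotif_pair_partnerArc (hfa : ¬ IsForkArc a) :
    IsColliderMotif {a, partnerArc n a} := by
  have h := val_partnerArc_of_mem hn ha
  rw [partnerNat_of_not_fork hfa, Prod.mk.injEq] at h
  have hlt : (partnerArc n a).1 < a.2 := by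
    have := (mem_filter.1 (partnerArc_mem_ttArcs hn ha)).2
    rwa [Fin.lt_def, h.2, ← Fin.lt_def] at this
  have he : partnerArc n a = ((partnerArc n a).1, a.2) := Prod.ext rfl (Fin.ext h.2)
  refine ⟨a.1, (partnerArc n a).1, a.2, (mem_filter.1 ha).2, hlt, fun hi => ?_, by rw [← he]⟩
  have := h.1
  rw [← hi] at this
  unfold IsForkArc at hfa
  split_ifs at this <;> omega

end PartnerArc

section ForkArcCount

variable {n : ℕ}

theorem card_filter_isForkArc_inArcs (j : Fin n) : #((inArcs j).filter IsForkArc) = j % 2 := by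
  rw [inArcs_eq_image, filter_image, card_image_of_injective _ (Prod.mk_left_injective j)]
  rcases Nat.mod_two_eq_zero_or_one j with h | h
  · rw [h, card_eq_zero, filter_eq_empty_iff]
    rintro i - ⟨-, h'⟩
    exact absurd h' (by simp [h])
  · rw [h, card_eq_one]
    refine ⟨⟨0, by omega⟩, ?_⟩
    ext i
    simp only [mem_filter, mem_Iio, IsForkArc, h, mem_singleton, Fin.ext_iff,
      Fin.lt_def, and_true]
    omega

theorem card_filter_not_isForkArc_inArcs (j : Fin n) :
    #((inArcs j).filter (¬ IsForkArc ·)) = 2 * (j / 2) := by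
  have h := card_filter_add_card_filter_not (s := inArcs j) IsForkArc
  rw [card_inArcs, card_filter_isForkArc_inArcs] at h
  omega

theorem card_filter_not_isForkArc (n : ℕ) :
    #((ttArcs n).filter (¬ IsForkArc ·)) = 2 * ∑ j : Fin n, (j : ℕ) / 2 := by
  rw [card_eq_sum_card_fiberwise (f := Prod.snd) (t := univ) fun _ _ => mem_univ _, mul_sum]
  refine sum_congr rfl fun j _ => ?_
  rw [← card_filter_not_isForkArc_inArcs, inArcs, filter_filter, filter_filter]
  simp only [and_comm]

end ForkArcCount

def pairDecomposition (n : ℕ) : Finset (Finset (Fin n × Fin n)) :=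
  pairBlocks (ttArcs n) (partnerArc n)

section PairDecomposition

variable {n : ℕ} (hn : Admissible n)
include hn

theorem isTTDecomposition_pairDecomposition : IsTTDecomposition (pairDecomposition n) :=
  ⟨pairwiseDisjoint_pairBlocks partnerArc_involutive,
    sup_pairBlocks partnerArc_involutive fun _ => partnerArc_mem_ttArcs hn⟩

theorem isColliderMotif_or_isForkMotif_of_mem_pairDecomposition {b : Finset (Fin n × Fin n)}
    (hb : b ∈ pairDecomposition n) : IsColliderMotif b ∨ IsForkMotif b := by
  obtain ⟨a, ha, rfl⟩ := mem_image.1 hb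
  by_cases hfa : IsForkArc a
  · exact .inr (isForkMotif_pair_partnerArc hn ha hfa)
  · exact .inl (isColliderMotif_pair_partnerArc hn ha hfa)

theorem filter_isColliderMotif_pair_partnerArc :
    (ttArcs n).filter (fun a => IsColliderMotif {a, partnerArc n a}) =
      (ttArcs n).filter (¬ IsForkArc ·) :=
  filter_congr fun _ ha =>
    ⟨fun hc hfa => (isForkMotif_pair_partnerArc hn ha hfa).not_isColliderMotif hc,
      isColliderMotif_pair_partnerArc hn ha⟩

theorem card_filter_isColliderMotif_pairDecomposition :
    #((pairDecomposition n).filter IsColliderMotif) = ∑ j : Fin n, (j : ℕ) / 2 := by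
  have h := card_biUnion_id_of_card_eq (D := (pairDecomposition n).filter IsColliderMotif)
    ((pairwiseDisjoint_pairBlocks partnerArc_involutive).subset (filter_subset _ _))
    fun b hb => (mem_filter.1 hb).2.card_eq_two
  rw [pairDecomposition, biUnion_filter_pairBlocks partnerArc_involutive
    fun _ => partnerArc_mem_ttArcs hn, filter_isColliderMotif_pair_partnerArc hn,
    card_filter_not_isForkArc] at h
  rw [pairDecomposition]
  omega

end PairDecomposition

theorem sum_range_div_two (n : ℕ) : ∑ j ∈ range n, j / 2 = (n - 1) ^ 2 / 4 := by
  induction n with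
  | zero => rfl
  | succ n ih =>
    rw [sum_range_succ, ih, Nat.add_sub_cancel]
    obtain ⟨m, rfl | rfl⟩ := Nat.even_or_odd' n
    · rcases m with _ | m
      · rfl
      · have h1 : (2 * (m + 1) - 1) ^ 2 = 4 * (m * m + m) + 1 := by
          rw [show 2 * (m + 1) - 1 = 2 * m + 1 by omega]; ring
        have h2 : (2 * (m + 1)) ^ 2 = 4 * (m * m + m) + 4 * (m + 1) := by ring
        rw [h1, h2]; omega
    · have h1 : (2 * m) ^ 2 = 4 * (m * m) := by ring
      have h2 : (2 * m + 1) ^ 2 = 4 * (m * m + m) + 1 := by ring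
      rw [Nat.add_sub_cancel, h1, h2]; omega

theorem mul_sub_two_div_four_of_even {n : ℕ} (hn : Even n) :
    n * (n - 2) / 4 = (n - 1) ^ 2 / 4 := by
  obtain ⟨m, rfl⟩ := hn
  rcases m with _ | m
  · rfl
  · have h1 : (m + 1 + (m + 1)) * (m + 1 + (m + 1) - 2) = 4 * (m * m + m) := by
      rw [show m + 1 + (m + 1) - 2 = 2 * m by omega]; ring
    have h2 : (m + 1 + (m + 1) - 1) ^ 2 = 4 * (m * m + m) + 1 := by
      rw [show m + 1 + (m + 1) - 1 = 2 * m + 1 by omega]; ring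
    rw [h1, h2]; omega

theorem tt_max_colliders_in_decomposition (n : ℕ) (hadm : Admissible n) :
    IsGreatest
      {m : ℕ | ∃ P : Finset (Finset (Fin n × Fin n)),
        IsTTDecomposition P ∧ (∀ b ∈ P, IsChainMotif b ∨ IsColliderMotif b ∨ IsForkMotif b) ∧ (P.filter IsColliderMotif).card = m}
      (if Even n then n * (n - 2) / 4 else (n - 1) ^ 2 / 4) := by
  have hvalue :
      (if Even n then n * (n - 2) / 4 else (n - 1) ^ 2 / 4) = ∑ j : Fin n, (j : ℕ) / 2 := by
    rw [Fin.sum_univ_eq_sum_range (· / 2), sum_range_div_two]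
    split_ifs with h
    exacts [mul_sub_two_div_four_of_even h, rfl]
  rw [hvalue]
  refine ⟨⟨pairDecomposition n, isTTDecomposition_pairDecomposition hadm, fun b hb => .inr ?_,
    card_filter_isColliderMotif_pairDecomposition hadm⟩, ?_⟩
  · exact isColliderMotif_or_isForkMotif_of_mem_pairDecomposition hadm hb
  · rintro m ⟨P, hP, -, rfl⟩
    exact card_filter_isColliderMotif_le hP.1
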